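/- Let f : (a, ∞) → ℝ be a function that is monotone decreasing and midpoint-style convex over the rationals, i.e., f(t·x + (1−t)·y) ≤ t·f(x) + (1−t)·f(y) for all x, y in (a, ∞) ∩ ℚ and all t ∈ [0,1] ∩ ℚ. Suppose moreover that for each x ∈ (a, ∞) there exist ε > 0 and L > 0 such that 0 ≤ f(v) − f(u) ≤ L(u − v) for all rationals u, v ∈ (x − ε, x + ε) with u ≥ v. Then f is continuous on (a, ∞). -/

import Mathlib

open Filter Topology Set

/-- On `(v, u)` the values of an antitone `f` are squeezed between `f u` and `f v`. -/
theorem continuousAt_of_antitoneOn_of_forall_exists_sub_lt {α : Type*} [LinearOrder α]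
    [TopologicalSpace α] [OrderTopology α] {f : α → ℝ} {s : Set α} {x : α}
    (hf : AntitoneOn f s) (hs : s ∈ 𝓝 x)
    (h : ∀ c > 0, ∃ v ∈ s, ∃ u ∈ s, v < x ∧ x < u ∧ f v - f u < c) :
    ContinuousAt f x := by
  have hx : x ∈ s := mem_of_mem_nhds hs
  refine tendsto_order.2 ⟨fun b hb => ?_, fun b hb => ?_⟩
  · obtain ⟨v, hv, u, hu, hvx, hxu, hdrop⟩ := h (f x - b) (sub_pos.2 hb)
    filter_upwards [inter_mem hs (Ioo_mem_nhds hvx hxu)] with y ⟨hy, hvy, hyu⟩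
    linarith [hf hv hx hvx.le, hf hy hu hyu.le]
  · obtain ⟨v, hv, u, hu, hvx, hxu, hdrop⟩ := h (b - f x) (sub_pos.2 hb)
    filter_upwards [inter_mem hs (Ioo_mem_nhds hvx hxu)] with y ⟨hy, hvy, hyu⟩
    linarith [hf hx hu hxu.le, hf hv hy hvy.le]

theorem exists_rat_sub_lt_of_forall_rat_sub_le {f : ℝ → ℝ} {t : Set ℝ} {x L c : ℝ}
    (ht : t ∈ 𝓝 x) (hL : 0 < L) (hc : 0 < c)
    (hLip : ∀ u v : ℚ, (u : ℝ) ∈ t → (v : ℝ) ∈ t → (v : ℝ) ≤ u → f v - f u ≤ L * (u - v)) :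
    ∃ v ∈ t, ∃ u ∈ t, v < x ∧ x < u ∧ f v - f u < c := by
  obtain ⟨r, hr, hball⟩ := Metric.mem_nhds_iff.1 ht
  set δ := min r (c / (2 * L))
  have hδ : 0 < δ := by positivity
  obtain ⟨v, hv, hvx⟩ := exists_rat_btwn (sub_lt_self x hδ)
  obtain ⟨u, hxu, hu⟩ := exists_rat_btwn (lt_add_of_pos_right x hδ)
  have hvt : (v : ℝ) ∈ t := hball <| by
    rw [Real.ball_eq_Ioo]; exact ⟨by linarith [min_le_left r (c / (2 * L))], by linarith⟩
  have hut : (u : ℝ) ∈ t := hball <| by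
    rw [Real.ball_eq_Ioo]; exact ⟨by linarith, by linarith [min_le_left r (c / (2 * L))]⟩
  have hgap : (u : ℝ) - v < c / L := by
    have : δ ≤ c / (2 * L) := min_le_right _ _
    rw [show c / L = 2 * (c / (2 * L)) by field_simp]
    linarith
  refine ⟨v, hvt, u, hut, hvx, hxu, ?_⟩
  calc f v - f u ≤ L * (u - v) := hLip u v hut hvt (by linarith)
    _ < c := (lt_div_iff₀' hL).1 hgap

theorem stmt_0_general (a : EReal) (f : ℝ → ℝ)
    (S : Set ℝ) (hS : S = {x : ℝ | a < (x : EReal)})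
    (hmono : ∀ x ∈ S, ∀ y ∈ S, x ≤ y → f y ≤ f x)
    (hlip : ∀ x ∈ S, ∃ ε > (0 : ℝ), ∃ L > (0 : ℝ),
      ∀ u v : ℚ, (u : ℝ) ∈ Set.Ioo (x - ε) (x + ε) → (v : ℝ) ∈ Set.Ioo (x - ε) (x + ε) →
        (v : ℝ) ≤ (u : ℝ) →
          0 ≤ f v - f u ∧ f v - f u ≤ L * ((u : ℝ) - (v : ℝ))) :
    ContinuousOn f S := by
  have hSopen : IsOpen S := hS ▸ isOpen_lt continuous_const continuous_coe_real_ereal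
  intro x hx
  obtain ⟨ε, hε, L, hL, hLip⟩ := hlip x hx
  have hnhds : S ∩ Ioo (x - ε) (x + ε) ∈ 𝓝 x :=
    inter_mem (hSopen.mem_nhds hx) (Ioo_mem_nhds (by linarith) (by linarith))
  refine ContinuousAt.continuousWithinAt <|
    continuousAt_of_antitoneOn_of_forall_exists_sub_lt (fun y hy z hz => hmono y hy z hz)
      (hSopen.mem_nhds hx) fun c hc => ?_
  obtain ⟨v, hv, u, hu, hvx, hxu, hdrop⟩ := exists_rat_sub_lt_of_forall_rat_sub_le hnhds hL hc
    fun u v hu hv huv => (hLip u v hu.2 hv.2 huv).2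
  exact ⟨v, hv.1, u, hu.1, hvx, hxu, hdrop⟩

/-- A monotone decreasing function on (a, ∞) (a ∈ ℝ ∪ {−∞}),
convex over the rationals, and locally Lipschitz on rational points,
is continuous on (a, ∞). -/
theorem stmt_0 (a : EReal) (f : ℝ → ℝ)
    (S : Set ℝ) (hS : S = {x : ℝ | a < (x : EReal)})
    (hmono : ∀ x ∈ S, ∀ y ∈ S, x ≤ y → f y ≤ f x)
    (hconv : ∀ x ∈ S, ∀ y ∈ S, (∃ qx : ℚ, (qx : ℝ) = x) → (∃ qy : ℚ, (qy : ℝ) = y) →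
      ∀ t : ℚ, 0 ≤ (t : ℝ) → (t : ℝ) ≤ 1 →
        f ((t : ℝ) * x + (1 - (t : ℝ)) * y) ≤ (t : ℝ) * f x + (1 - (t : ℝ)) * f y)
    (hlip : ∀ x ∈ S, ∃ ε > (0 : ℝ), ∃ L > (0 : ℝ),
      ∀ u v : ℚ, (u : ℝ) ∈ Set.Ioo (x - ε) (x + ε) → (v : ℝ) ∈ Set.Ioo (x - ε) (x + ε) →
        (v : ℝ) ≤ (u : ℝ) →
          0 ≤ f v - f u ∧ f v - f u ≤ L * ((u : ℝ) - (v : ℝ))) :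
    ContinuousOn f S :=
  stmt_0_general a f S hS hmono hlip
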